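/- arXiv:1206.1958 — 5 statements merged into one kernel-verified Lean document; each statement's English description precedes it below -/
import Mathlib

section
/- Let $N>1$, $a,a'>0$, and $|\theta|\le\pi/2$. Then there is a constant $C$ depending only on $N$ such that $\int_{-\pi}^{\pi} (1+a|\sin\varphi|)^{-N}(1+a'|\sin(\varphi+\theta)|)^{-N}\,d\varphi \le C\max(a,a')^{-1}(1+\min(a,a')|\theta|)^{-N}$. -/
open MeasureTheory Real intervalIntegral

section AngularAux

private lemma jordan_abs {x : ℝ} (hx : |x| ≤ π / 2) : 2 / π * |x| ≤ |Real.sin x| := by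
  have h := Real.mul_le_sin (abs_nonneg x) hx
  have h2 : Real.sin |x| ≤ |Real.sin x| := by
    rcases abs_cases x with ⟨h1, _⟩ | ⟨h1, _⟩
    · rw [h1]; exact le_abs_self _
    · rw [h1, Real.sin_neg]; exact neg_le_abs _
  linarith

private lemma abs_sin_eq {x : ℝ} (h : |x| ≤ π) : |Real.sin x| = Real.sin |x| := by
  rcases abs_cases x with ⟨h1, h2⟩ | ⟨h1, h2⟩
  · rw [h1]; exact abs_of_nonneg (Real.sin_nonneg_of_nonneg_of_le_pi h2 (h1 ▸ h))
  · rw [h1, Real.sin_neg]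
    refine abs_of_nonpos (Real.sin_nonpos_of_nonpos_of_neg_pi_le h2.le ?_)
    rw [h1] at h; linarith

private lemma sin_lower_A {θ φ : ℝ} (hθ : |θ| ≤ π / 2) (hφ : |φ| ≤ |θ| / 2) :
    |θ| / π ≤ |Real.sin (φ + θ)| := by
  have hπ := Real.pi_pos
  have h1 : |θ| / 2 ≤ |φ + θ| := by
    have h := abs_add_le (φ + θ) (-φ)
    rw [show φ + θ + -φ = θ by ring, abs_neg] at h
    linarith
  rcases le_or_gt (|φ + θ|) (π / 2) with h2 | h2
  · have hj := jordan_abs h2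
    calc |θ| / π = 2 / π * (|θ| / 2) := by ring
      _ ≤ 2 / π * |φ + θ| := mul_le_mul_of_nonneg_left h1 (by positivity)
      _ ≤ _ := hj
  · have h3 : |φ + θ| ≤ 3 * π / 4 := by
      have h := abs_add_le φ θ; linarith
    have h4 : |Real.sin (φ + θ)| = Real.sin |φ + θ| := abs_sin_eq (by linarith)
    have h5 : Real.sin |φ + θ| = Real.sin (π - |φ + θ|) := (Real.sin_pi_sub _).symm
    have h6 : 2 / π * (π - |φ + θ|) ≤ Real.sin (π - |φ + θ|) :=
      Real.mul_le_sin (by linarith) (by linarith)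
    have h7 : (1 : ℝ) / 2 ≤ 2 / π * (π - |φ + θ|) := by
      have hq : π / 4 ≤ π - |φ + θ| := by linarith
      calc (1 : ℝ) / 2 = 2 / π * (π / 4) := by field_simp; ring
        _ ≤ _ := mul_le_mul_of_nonneg_left hq (by positivity)
    have h8 : |θ| / π ≤ 1 / 2 := by
      rw [div_le_iff₀ hπ]; linarith
    linarith

private lemma contF (c θ N : ℝ) (hc : 0 ≤ c) :
    Continuous (fun φ : ℝ => (1 + c * |Real.sin (φ + θ)|) ^ (-N)) := by
  apply Continuous.rpow_const (by continuity)
  intro x; left; positivity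

private lemma contF0 (c N : ℝ) (hc : 0 ≤ c) :
    Continuous (fun φ : ℝ => (1 + c * |Real.sin φ|) ^ (-N)) := by
  apply Continuous.rpow_const (by continuity)
  intro x; left; positivity

private lemma contAbs (c N : ℝ) (hc : 0 ≤ c) :
    Continuous (fun x : ℝ => (1 + c * |x|) ^ (-N)) := by
  apply Continuous.rpow_const (by continuity)
  intro x; left; positivity

/-- basic integral : ∫_0^T (1+cx)^{-N} ≤ 1/(c(N-1)). -/
private lemma int_aux (N c T : ℝ) (hN : 1 < N) (hc : 0 < c) (hT : 0 ≤ T) :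
    (∫ x in (0:ℝ)..T, (1 + c * x) ^ (-N)) ≤ 1 / (c * (N - 1)) := by
  have h1 : (∫ x in (0:ℝ)..T, (1 + c * x) ^ (-N))
      = ∫ x in (0:ℝ)..T, (fun u : ℝ => u ^ (-N)) (c * x + 1) := by
    apply intervalIntegral.integral_congr; intro x _; show (1 + c * x) ^ (-N) = (c * x + 1) ^ (-N); rw [add_comm 1 (c * x)]
  rw [h1, intervalIntegral.integral_comp_mul_add (fun u : ℝ => u ^ (-N)) hc.ne' 1]
  have hcT : (1:ℝ) ≤ c * T + 1 := by nlinarith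
  have hmem : (0:ℝ) ∉ Set.uIcc 1 (c * T + 1) := by
    rw [Set.uIcc_of_le hcT]
    rintro ⟨h0, -⟩; norm_num at h0
  have hr : (∫ x in (1:ℝ)..(c * T + 1), x ^ (-N))
      = ((c * T + 1) ^ (-N + 1) - 1 ^ (-N + 1)) / (-N + 1) :=
    integral_rpow (Or.inr ⟨by intro h; have := neg_injective h; linarith, hmem⟩)
  rw [show c * 0 + 1 = (1:ℝ) by ring, hr, Real.one_rpow]
  set X := (c * T + 1) ^ (-N + 1) with hXdef
  have hX : 0 ≤ X := Real.rpow_nonneg (by linarith) _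
  have he : (X - 1) / (-N + 1) = (1 - X) / (N - 1) := by
    rw [div_eq_div_iff (by linarith) (by linarith)]; ring
  rw [smul_eq_mul, he]
  have h2 : (1 - X) / (N - 1) ≤ 1 / (N - 1) :=
    (div_le_div_iff_of_pos_right (by linarith)).mpr (by linarith)
  calc c⁻¹ * ((1 - X) / (N - 1)) ≤ c⁻¹ * (1 / (N - 1)) :=
        mul_le_mul_of_nonneg_left h2 (inv_nonneg.mpr hc.le)
    _ = 1 / (c * (N - 1)) := by field_simp

private lemma int_sym (N c T : ℝ) (hN : 1 < N) (hc : 0 < c) (hT : 0 ≤ T) :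
    (∫ x in (-T)..T, (1 + c * |x|) ^ (-N)) ≤ 2 / (c * (N - 1)) := by
  have hcont := contAbs c N hc.le
  have hsplit := intervalIntegral.integral_add_adjacent_intervals
    (a := -T) (b := 0) (c := T) (μ := volume) (f := fun x : ℝ => (1 + c * |x|) ^ (-N))
    (hcont.intervalIntegrable _ _) (hcont.intervalIntegrable _ _)
  have hneg : (∫ x in (-T)..(0:ℝ), (1 + c * |x|) ^ (-N))
      = ∫ x in (0:ℝ)..T, (1 + c * |x|) ^ (-N) := by
    have h := intervalIntegral.integral_comp_neg (a := (0:ℝ)) (b := T)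
      (f := fun x : ℝ => (1 + c * |x|) ^ (-N))
    simp only [abs_neg, neg_zero] at h
    exact h.symm
  have hpos : (∫ x in (0:ℝ)..T, (1 + c * |x|) ^ (-N)) ≤ 1 / (c * (N - 1)) := by
    have he : (∫ x in (0:ℝ)..T, (1 + c * |x|) ^ (-N))
        = ∫ x in (0:ℝ)..T, (1 + c * x) ^ (-N) := by
      apply intervalIntegral.integral_congr
      intro x hx
      rw [Set.uIcc_of_le hT] at hx
      show (1 + c * |x|) ^ (-N) = (1 + c * x) ^ (-N)
      rw [abs_of_nonneg hx.1]
    rw [he]; exact int_aux N c T hN hc hT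
  have := int_aux N c T hN hc hT
  rw [← hsplit, hneg]
  have h2 : 2 / (c * (N - 1)) = 1 / (c * (N - 1)) + 1 / (c * (N - 1)) := by ring
  linarith

private lemma int_sin (N c : ℝ) (hN : 1 < N) (hc : 0 < c) :
    (∫ ψ in (-(π/2))..(π/2), (1 + c * |Real.sin ψ|) ^ (-N)) ≤ π / (c * (N - 1)) := by
  have hπ := Real.pi_pos
  have key : ∀ ψ ∈ Set.Icc (-(π/2)) (π/2),
      (1 + c * |Real.sin ψ|) ^ (-N) ≤ (1 + 2 * c / π * |ψ|) ^ (-N) := by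
    intro ψ hψ
    have hj : 2 / π * |ψ| ≤ |Real.sin ψ| := jordan_abs (abs_le.mpr ⟨hψ.1, hψ.2⟩)
    apply Real.rpow_le_rpow_of_nonpos (by positivity) ?_ (by linarith)
    have h1 : 2 * c / π * |ψ| = c * (2 / π * |ψ|) := by ring
    nlinarith [mul_le_mul_of_nonneg_left hj hc.le]
  have h1 : (∫ ψ in (-(π/2))..(π/2), (1 + c * |Real.sin ψ|) ^ (-N))
      ≤ ∫ ψ in (-(π/2))..(π/2), (1 + 2 * c / π * |ψ|) ^ (-N) :=
    intervalIntegral.integral_mono_on (by linarith)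
      ((contF0 c N hc.le).intervalIntegrable _ _)
      ((contAbs (2 * c / π) N (by positivity)).intervalIntegrable _ _) key
  have h2 := int_sym N (2 * c / π) (π/2) hN (by positivity) (by positivity)
  have h3 : 2 / (2 * c / π * (N - 1)) = π / (c * (N - 1)) := by
    have hd : (0:ℝ) < 2 * c / π * (N - 1) := by
      have h0 : (0:ℝ) < 2 * c / π := by positivity
      exact mul_pos h0 (by linarith)
    rw [div_eq_div_iff hd.ne' (mul_pos hc (show (0:ℝ) < N - 1 by linarith)).ne']
    field_simp
  linarith

private lemma int_sin_shift (N c θ : ℝ) (hc : 0 ≤ c) :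
    (∫ φ in (-(π/2))..(π/2), (1 + c * |Real.sin (φ + θ)|) ^ (-N))
      = ∫ ψ in (-(π/2))..(π/2), (1 + c * |Real.sin ψ|) ^ (-N) := by
  have h1 : (∫ φ in (-(π/2))..(π/2), (1 + c * |Real.sin (φ + θ)|) ^ (-N))
      = ∫ x in (-(π/2) + θ)..(π/2 + θ), (1 + c * |Real.sin x|) ^ (-N) :=
    intervalIntegral.integral_comp_add_right (f := fun x : ℝ => (1 + c * |Real.sin x|) ^ (-N)) θ
  have hper : Function.Periodic (fun x : ℝ => (1 + c * |Real.sin x|) ^ (-N)) π := by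
    intro x; simp [Real.sin_add_pi]
  have h2 := hper.intervalIntegral_add_eq (-(π/2) + θ) (-(π/2))
  rw [show -(π/2) + θ + π = π/2 + θ by ring, show -(π/2) + π = π/2 by ring] at h2
  rw [h1]; exact h2

/-- pointwise key bound. -/
private lemma key_bound (N c s t : ℝ) (hN : 0 < N) (hc : 0 ≤ c) (ht : 0 ≤ t)
    (hs : t / π ≤ s) :
    (1 + c * s) ^ (-N) ≤ π ^ N * (1 + c * t) ^ (-N) := by
  have hπ := Real.pi_pos
  have hs0 : 0 ≤ s := le_trans (by positivity) hs
  have hsπ : t ≤ s * π := (div_le_iff₀ hπ).mp hs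
  have h1 : (1 + c * t) / π ≤ 1 + c * s := by
    rw [div_le_iff₀ hπ]
    nlinarith [mul_le_mul_of_nonneg_left hsπ hc, Real.pi_gt_three]
  have h2 : ((1 + c * t) / π) ^ (-N) = π ^ N * (1 + c * t) ^ (-N) := by
    rw [Real.div_rpow (by positivity) hπ.le, div_eq_mul_inv, Real.rpow_neg hπ.le, inv_inv,
      mul_comm]
  calc (1 + c * s) ^ (-N) ≤ ((1 + c * t) / π) ^ (-N) :=
        Real.rpow_le_rpow_of_nonpos (by positivity) h1 (by linarith)
    _ = _ := h2

private lemma split3 (F : ℝ → ℝ) (hF : Continuous F) (s : ℝ) :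
    (∫ x in (-(π/2))..(π/2), F x)
      = (∫ x in (-(π/2))..(-s), F x) + (∫ x in (-s)..s, F x) + ∫ x in s..(π/2), F x := by
  have h1 : (∫ x in (-(π/2))..(-s), F x) + (∫ x in (-s)..s, F x)
      = ∫ x in (-(π/2))..s, F x :=
    intervalIntegral.integral_add_adjacent_intervals
      (hF.intervalIntegrable _ _) (hF.intervalIntegrable _ _)
  rw [h1, intervalIntegral.integral_add_adjacent_intervals
      (hF.intervalIntegrable _ _) (hF.intervalIntegrable _ _)]

set_option maxHeartbeats 2000000 in
/-- Main asymmetric estimate. -/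
private lemma main_est (N : ℝ) (hN : 1 < N) (a a' θ : ℝ) (ha : 0 < a) (ha' : 0 < a')
    (haa : a ≤ a') (hθ : |θ| ≤ π / 2) :
    (∫ φ in (-π)..π, (1 + a * |Real.sin φ|) ^ (-N) * (1 + a' * |Real.sin (φ + θ)|) ^ (-N))
      ≤ (2 * (π ^ N * 2 ^ N * (1 + π / (N - 1)) + π ^ N * π / (N - 1)))
          * a'⁻¹ * (1 + a * |θ|) ^ (-N) := by
  have hπ := Real.pi_pos
  have hN1 : (0:ℝ) < N - 1 := by linarith
  have hN0 : (0:ℝ) < N := by linarith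
  have ht0 : (0:ℝ) ≤ |θ| := abs_nonneg θ
  have hP0 : (0:ℝ) < (1 + a * |θ|) ^ (-N) := Real.rpow_pos_of_pos (by positivity) _
  have hQ0 : (0:ℝ) < (1 + a' * |θ|) ^ (-N) := Real.rpow_pos_of_pos (by positivity) _
  have hπN : (0:ℝ) < π ^ N := Real.rpow_pos_of_pos hπ _
  have h2N : (0:ℝ) < (2:ℝ) ^ N := Real.rpow_pos_of_pos (by norm_num) _
  set f : ℝ → ℝ :=
    fun φ => (1 + a * |Real.sin φ|) ^ (-N) * (1 + a' * |Real.sin (φ + θ)|) ^ (-N) with hf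
  have hcontf : Continuous f := (contF0 a N ha.le).mul (contF a' θ N ha'.le)
  have hcontg : Continuous (fun φ : ℝ => (1 + a' * |Real.sin (φ + θ)|) ^ (-N)) :=
    contF a' θ N ha'.le
  have hconth : Continuous (fun φ : ℝ => (1 + a * |Real.sin φ|) ^ (-N)) := contF0 a N ha.le
  have hperf : Function.Periodic f π := by
    intro x
    simp only [hf]
    rw [show x + π + θ = x + θ + π by ring]
    simp [Real.sin_add_pi]
  -- Step 1 : reduce to the half-period interval
  have hIJ : (∫ φ in (-π)..π, f φ) = 2 * ∫ φ in (-(π/2))..(π/2), f φ := by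
    have hs := intervalIntegral.integral_add_adjacent_intervals (a := -π) (b := 0) (c := π)
      (μ := volume) (f := f) (hcontf.intervalIntegrable _ _) (hcontf.intervalIntegrable _ _)
    have h1 := hperf.intervalIntegral_add_eq (-π) (-(π/2))
    rw [show -π + π = (0:ℝ) by ring, show -(π/2) + π = π/2 by ring] at h1
    have h2 := hperf.intervalIntegral_add_eq 0 (-(π/2))
    rw [zero_add, show -(π/2) + π = π/2 by ring] at h2
    rw [← hs, h1, h2]; ring
  have hsplitJ : (∫ φ in (-(π/2))..(π/2), f φ)
      = (∫ φ in (-(π/2))..(-(|θ|/2)), f φ) + (∫ φ in (-(|θ|/2))..(|θ|/2), f φ)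
          + ∫ φ in (|θ|/2)..(π/2), f φ := split3 f hcontf (|θ|/2)
  -- pointwise bound on the side regions
  have hside : ∀ φ : ℝ, |θ| / 2 ≤ |φ| → |φ| ≤ π/2 →
      f φ ≤ (π ^ N * (1 + a * |θ|) ^ (-N)) * (1 + a' * |Real.sin (φ + θ)|) ^ (-N) := by
    intro φ h1 h2
    have hj : 2 / π * |φ| ≤ |Real.sin φ| := jordan_abs h2
    have hlow : |θ| / π ≤ |Real.sin φ| := by
      have he : |θ| / π = 2 / π * (|θ| / 2) := by ring
      rw [he]
      exact le_trans (mul_le_mul_of_nonneg_left h1 (by positivity)) hj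
    have hkb := key_bound N a (|Real.sin φ|) (|θ|) hN0 ha.le ht0 hlow
    simp only [hf]
    exact mul_le_mul_of_nonneg_right hkb (Real.rpow_nonneg (by positivity) _)
  -- the side integrals
  have hG : (∫ φ in (-(π/2))..(π/2), (1 + a' * |Real.sin (φ + θ)|) ^ (-N))
      ≤ π / (a' * (N - 1)) := by
    rw [int_sin_shift N a' θ ha'.le]; exact int_sin N a' hN ha'
  have hB1 : (∫ φ in (-(π/2))..(-(|θ|/2)), f φ)
      ≤ (π ^ N * (1 + a * |θ|) ^ (-N)) *
          ∫ φ in (-(π/2))..(-(|θ|/2)), (1 + a' * |Real.sin (φ + θ)|) ^ (-N) := by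
    rw [← intervalIntegral.integral_const_mul]
    apply intervalIntegral.integral_mono_on (by linarith) (hcontf.intervalIntegrable _ _)
      ((continuous_const.mul hcontg).intervalIntegrable _ _)
    rintro φ ⟨hl, hr⟩
    have hφ0 : φ ≤ 0 := by linarith
    exact hside φ (by rw [abs_of_nonpos hφ0]; linarith) (by rw [abs_of_nonpos hφ0]; linarith)
  have hB2 : (∫ φ in (|θ|/2)..(π/2), f φ)
      ≤ (π ^ N * (1 + a * |θ|) ^ (-N)) *
          ∫ φ in (|θ|/2)..(π/2), (1 + a' * |Real.sin (φ + θ)|) ^ (-N) := by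
    rw [← intervalIntegral.integral_const_mul]
    apply intervalIntegral.integral_mono_on (by linarith) (hcontf.intervalIntegrable _ _)
      ((continuous_const.mul hcontg).intervalIntegrable _ _)
    rintro φ ⟨hl, hr⟩
    have hφ0 : 0 ≤ φ := by linarith
    exact hside φ (by rw [abs_of_nonneg hφ0]; linarith) (by rw [abs_of_nonneg hφ0]; linarith)
  have hsum_side : (∫ φ in (-(π/2))..(-(|θ|/2)), (1 + a' * |Real.sin (φ + θ)|) ^ (-N))
      + (∫ φ in (|θ|/2)..(π/2), (1 + a' * |Real.sin (φ + θ)|) ^ (-N))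
      ≤ π / (a' * (N - 1)) := by
    have hsp := split3 (fun φ : ℝ => (1 + a' * |Real.sin (φ + θ)|) ^ (-N)) hcontg (|θ|/2)
    have hmid : 0 ≤ ∫ φ in (-(|θ|/2))..(|θ|/2), (1 + a' * |Real.sin (φ + θ)|) ^ (-N) :=
      intervalIntegral.integral_nonneg (by linarith)
        (fun u _ => Real.rpow_nonneg (by positivity) _)
    linarith
  have hB : (∫ φ in (-(π/2))..(-(|θ|/2)), f φ) + (∫ φ in (|θ|/2)..(π/2), f φ)
      ≤ (π ^ N * (1 + a * |θ|) ^ (-N)) * (π / (a' * (N - 1))) := by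
    have hmm := mul_le_mul_of_nonneg_left hsum_side
      (show (0:ℝ) ≤ π ^ N * (1 + a * |θ|) ^ (-N) by positivity)
    nlinarith [hB1, hB2]
  -- Region A pointwise bound
  have hApt : ∀ φ ∈ Set.Icc (-(|θ|/2)) (|θ|/2),
      f φ ≤ (π ^ N * (1 + a' * |θ|) ^ (-N)) * (1 + a * |Real.sin φ|) ^ (-N) := by
    intro φ hφ
    have hφa : |φ| ≤ |θ| / 2 := abs_le.mpr ⟨hφ.1, hφ.2⟩
    have hlow : |θ| / π ≤ |Real.sin (φ + θ)| := sin_lower_A hθ hφa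
    have hkb := key_bound N a' (|Real.sin (φ + θ)|) (|θ|) hN0 ha'.le ht0 hlow
    simp only [hf]
    calc (1 + a * |Real.sin φ|) ^ (-N) * (1 + a' * |Real.sin (φ + θ)|) ^ (-N)
        ≤ (1 + a * |Real.sin φ|) ^ (-N) * (π ^ N * (1 + a' * |θ|) ^ (-N)) :=
          mul_le_mul_of_nonneg_left hkb (Real.rpow_nonneg (by positivity) _)
      _ = (π ^ N * (1 + a' * |θ|) ^ (-N)) * (1 + a * |Real.sin φ|) ^ (-N) := mul_comm _ _
  have hJA : (∫ φ in (-(|θ|/2))..(|θ|/2), f φ)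
      ≤ (π ^ N * (1 + a' * |θ|) ^ (-N)) *
          ∫ φ in (-(|θ|/2))..(|θ|/2), (1 + a * |Real.sin φ|) ^ (-N) := by
    rw [← intervalIntegral.integral_const_mul]
    exact intervalIntegral.integral_mono_on (by linarith) (hcontf.intervalIntegrable _ _)
      ((continuous_const.mul hconth).intervalIntegrable _ _) hApt
  -- two bounds for the inner integral H
  have hH1 : (∫ φ in (-(|θ|/2))..(|θ|/2), (1 + a * |Real.sin φ|) ^ (-N)) ≤ |θ| := by
    have h1 : (∫ φ in (-(|θ|/2))..(|θ|/2), (1 + a * |Real.sin φ|) ^ (-N))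
        ≤ ∫ _ in (-(|θ|/2))..(|θ|/2), (1:ℝ) := by
      apply intervalIntegral.integral_mono_on (by linarith)
        (hconth.intervalIntegrable _ _) (continuous_const.intervalIntegrable _ _)
      intro x _
      apply Real.rpow_le_one_of_one_le_of_nonpos ?_ (by linarith)
      nlinarith [mul_nonneg ha.le (abs_nonneg (Real.sin x))]
    rw [intervalIntegral.integral_const, smul_eq_mul] at h1
    linarith
  have hH2 : (∫ φ in (-(|θ|/2))..(|θ|/2), (1 + a * |Real.sin φ|) ^ (-N))
      ≤ π / (a * (N - 1)) := by
    have hsp := split3 (fun φ : ℝ => (1 + a * |Real.sin φ|) ^ (-N)) hconth (|θ|/2)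
    have hfull := int_sin N a hN ha
    have hs1 : 0 ≤ ∫ φ in (-(π/2))..(-(|θ|/2)), (1 + a * |Real.sin φ|) ^ (-N) :=
      intervalIntegral.integral_nonneg (by linarith)
        (fun u _ => Real.rpow_nonneg (by positivity) _)
    have hs2 : 0 ≤ ∫ φ in (|θ|/2)..(π/2), (1 + a * |Real.sin φ|) ^ (-N) :=
      intervalIntegral.integral_nonneg (by linarith)
        (fun u _ => Real.rpow_nonneg (by positivity) _)
    linarith
  -- case analysis
  have hcase : (π ^ N * (1 + a' * |θ|) ^ (-N)) *
      (∫ φ in (-(|θ|/2))..(|θ|/2), (1 + a * |Real.sin φ|) ^ (-N))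
      ≤ (π ^ N * 2 ^ N * (1 + π / (N - 1))) * a'⁻¹ * (1 + a * |θ|) ^ (-N) := by
    rcases le_or_gt (a * |θ|) 1 with hat | hat
    · -- small case : use H ≤ |θ|
      have h2P : (1:ℝ) ≤ 2 ^ N * (1 + a * |θ|) ^ (-N) := by
        have h1 : (2:ℝ) ^ (-N) ≤ (1 + a * |θ|) ^ (-N) :=
          Real.rpow_le_rpow_of_nonpos (by positivity) (by linarith) (by linarith)
        have h2 : (2:ℝ) ^ N * 2 ^ (-N) = 1 := by
          rw [← Real.rpow_add (by norm_num : (0:ℝ) < 2)]; norm_num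
        nlinarith
      have hQt : (1 + a' * |θ|) ^ (-N) * |θ| ≤ a'⁻¹ := by
        rcases le_or_gt (a' * |θ|) 1 with hat' | hat'
        · have hQ1 : (1 + a' * |θ|) ^ (-N) ≤ 1 :=
            Real.rpow_le_one_of_one_le_of_nonpos
              (by nlinarith [mul_nonneg ha'.le ht0]) (by linarith)
          have ht' : |θ| ≤ a'⁻¹ := by
            rw [← one_div, le_div_iff₀ ha']; linarith [mul_comm (|θ|) a']
          calc (1 + a' * |θ|) ^ (-N) * |θ| ≤ 1 * |θ| :=
                mul_le_mul_of_nonneg_right hQ1 ht0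
            _ = |θ| := one_mul _
            _ ≤ a'⁻¹ := ht'
        · have htpos : 0 < |θ| := by nlinarith
          have hQle : (1 + a' * |θ|) ^ (-N) ≤ (a' * |θ|) ^ (-N) :=
            Real.rpow_le_rpow_of_nonpos (by positivity) (by linarith) (by linarith)
          have e1 : (a' * |θ|) ^ (-N) * |θ| = a' ^ (-N) * |θ| ^ (-N + 1) := by
            rw [Real.mul_rpow ha'.le htpos.le, mul_assoc]
            congr 1
            have h := Real.rpow_add htpos (-N) 1
            rw [Real.rpow_one] at h
            exact h.symm
          have e2 : (|θ| : ℝ) ^ (-N + 1) ≤ (a'⁻¹) ^ (-N + 1) := by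
            apply Real.rpow_le_rpow_of_nonpos (inv_pos.mpr ha') ?_ (by linarith)
            rw [← one_div, div_le_iff₀ ha']
            nlinarith
          have e3 : (a'⁻¹ : ℝ) ^ (-N + 1) = a' ^ (N - 1) := by
            rw [Real.inv_rpow ha'.le, show (-N + 1 : ℝ) = -(N - 1) by ring,
              Real.rpow_neg ha'.le, inv_inv]
          have e4 : a' ^ (-N) * a' ^ (N - 1) = a'⁻¹ := by
            rw [← Real.rpow_add ha', show -N + (N - 1) = (-1 : ℝ) by ring, Real.rpow_neg_one]
          calc (1 + a' * |θ|) ^ (-N) * |θ| ≤ (a' * |θ|) ^ (-N) * |θ| :=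
                mul_le_mul_of_nonneg_right hQle ht0
            _ = a' ^ (-N) * |θ| ^ (-N + 1) := e1
            _ ≤ a' ^ (-N) * (a'⁻¹) ^ (-N + 1) :=
                mul_le_mul_of_nonneg_left e2 (Real.rpow_nonneg ha'.le _)
            _ = a' ^ (-N) * a' ^ (N - 1) := by rw [e3]
            _ = a'⁻¹ := e4
      have s1 : (π ^ N * (1 + a' * |θ|) ^ (-N)) *
          (∫ φ in (-(|θ|/2))..(|θ|/2), (1 + a * |Real.sin φ|) ^ (-N))
          ≤ (π ^ N * (1 + a' * |θ|) ^ (-N)) * |θ| :=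
        mul_le_mul_of_nonneg_left hH1 (by positivity)
      have s3 : π ^ N * ((1 + a' * |θ|) ^ (-N) * |θ|) ≤ π ^ N * a'⁻¹ :=
        mul_le_mul_of_nonneg_left hQt hπN.le
      have s4 : π ^ N * a'⁻¹ ≤ π ^ N * a'⁻¹ * (2 ^ N * (1 + a * |θ|) ^ (-N)) :=
        le_mul_of_one_le_right (by positivity) h2P
      have s6 : π ^ N * 2 ^ N ≤ π ^ N * 2 ^ N * (1 + π / (N - 1)) := by
        nlinarith [div_pos hπ hN1, mul_pos hπN h2N]
      have s7 : π ^ N * a'⁻¹ * (2 ^ N * (1 + a * |θ|) ^ (-N))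
          = (π ^ N * 2 ^ N) * (a'⁻¹ * (1 + a * |θ|) ^ (-N)) := by ring
      have s8 : (π ^ N * 2 ^ N) * (a'⁻¹ * (1 + a * |θ|) ^ (-N))
          ≤ (π ^ N * 2 ^ N * (1 + π / (N - 1))) * (a'⁻¹ * (1 + a * |θ|) ^ (-N)) :=
        mul_le_mul_of_nonneg_right s6 (by positivity)
      calc (π ^ N * (1 + a' * |θ|) ^ (-N)) *
            (∫ φ in (-(|θ|/2))..(|θ|/2), (1 + a * |Real.sin φ|) ^ (-N))
          ≤ (π ^ N * (1 + a' * |θ|) ^ (-N)) * |θ| := s1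
        _ = π ^ N * ((1 + a' * |θ|) ^ (-N) * |θ|) := by ring
        _ ≤ π ^ N * a'⁻¹ := s3
        _ ≤ π ^ N * a'⁻¹ * (2 ^ N * (1 + a * |θ|) ^ (-N)) := s4
        _ = (π ^ N * 2 ^ N) * (a'⁻¹ * (1 + a * |θ|) ^ (-N)) := s7
        _ ≤ (π ^ N * 2 ^ N * (1 + π / (N - 1))) * (a'⁻¹ * (1 + a * |θ|) ^ (-N)) := s8
        _ = (π ^ N * 2 ^ N * (1 + π / (N - 1))) * a'⁻¹ * (1 + a * |θ|) ^ (-N) := by ring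
    · -- large case : use H ≤ π/(a(N-1))
      have htpos : 0 < |θ| := by nlinarith
      have hat' : 1 < a' * |θ| := by nlinarith
      have hQle : (1 + a' * |θ|) ^ (-N) ≤ (a' * |θ|) ^ (-N) :=
        Real.rpow_le_rpow_of_nonpos (by positivity) (by linarith) (by linarith)
      have hPge : (2 * (a * |θ|)) ^ (-N) ≤ (1 + a * |θ|) ^ (-N) :=
        Real.rpow_le_rpow_of_nonpos (by positivity) (by linarith) (by linarith)
      have h2c : (2:ℝ) ^ N * 2 ^ (-N) = 1 := by
        rw [← Real.rpow_add (by norm_num : (0:ℝ) < 2)]; norm_num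
      -- claim2 : (a'|θ|)^{-N} * a⁻¹ ≤ 2^N * a'⁻¹ * (1+a|θ|)^{-N}
      have claim2 : (a' * |θ|) ^ (-N) * a⁻¹
          ≤ 2 ^ N * a'⁻¹ * (1 + a * |θ|) ^ (-N) := by
        have k1 : a' ^ (1 - N) ≤ a ^ (1 - N) :=
          Real.rpow_le_rpow_of_nonpos ha haa (by linarith)
        have k2 : a' ^ (1 - N) = a' * a' ^ (-N) := by
          rw [show (1 - N : ℝ) = 1 + -N by ring, Real.rpow_add ha', Real.rpow_one]
        have k3 : a ^ (1 - N) = a * a ^ (-N) := by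
          rw [show (1 - N : ℝ) = 1 + -N by ring, Real.rpow_add ha, Real.rpow_one]
        have k4 : a' ^ (-N) * a⁻¹ ≤ a'⁻¹ * a ^ (-N) := by
          have hbase : a' ^ (-N) * a' ≤ a ^ (-N) * a := by
            have e := k1
            rw [k2, k3] at e
            linarith [e]
          rw [show a' ^ (-N) * a⁻¹ = a' ^ (-N) / a by rw [div_eq_mul_inv],
              show a'⁻¹ * a ^ (-N) = a ^ (-N) / a' by rw [div_eq_mul_inv, mul_comm],
              div_le_div_iff₀ ha ha']
          linarith [hbase]
        have e5 : (a' * |θ|) ^ (-N) = a' ^ (-N) * |θ| ^ (-N) :=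
          Real.mul_rpow ha'.le htpos.le
        have e6 : (2 * (a * |θ|)) ^ (-N) = 2 ^ (-N) * (a ^ (-N) * |θ| ^ (-N)) := by
          rw [Real.mul_rpow (by norm_num) (by positivity), Real.mul_rpow ha.le htpos.le]
        have k5 : a' ^ (-N) * |θ| ^ (-N) * a⁻¹ ≤ a'⁻¹ * a ^ (-N) * |θ| ^ (-N) := by
          have := mul_le_mul_of_nonneg_right k4
            (Real.rpow_nonneg htpos.le (-N))
          nlinarith [this]
        have k6 : a'⁻¹ * a ^ (-N) * |θ| ^ (-N)
            ≤ 2 ^ N * a'⁻¹ * (1 + a * |θ|) ^ (-N) := by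
          have hmono : 2 ^ N * a'⁻¹ * (2 * (a * |θ|)) ^ (-N)
              ≤ 2 ^ N * a'⁻¹ * (1 + a * |θ|) ^ (-N) :=
            mul_le_mul_of_nonneg_left hPge (by positivity)
          have heq2 : 2 ^ N * a'⁻¹ * (2 * (a * |θ|)) ^ (-N)
              = a'⁻¹ * a ^ (-N) * |θ| ^ (-N) := by
            rw [e6]
            calc (2:ℝ) ^ N * a'⁻¹ * (2 ^ (-N) * (a ^ (-N) * |θ| ^ (-N)))
                = ((2:ℝ) ^ N * 2 ^ (-N)) * (a'⁻¹ * a ^ (-N) * |θ| ^ (-N)) := by ring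
              _ = a'⁻¹ * a ^ (-N) * |θ| ^ (-N) := by rw [h2c]; ring
          linarith [heq2 ▸ hmono]
        calc (a' * |θ|) ^ (-N) * a⁻¹ = a' ^ (-N) * |θ| ^ (-N) * a⁻¹ := by rw [e5]
          _ ≤ a'⁻¹ * a ^ (-N) * |θ| ^ (-N) := k5
          _ ≤ 2 ^ N * a'⁻¹ * (1 + a * |θ|) ^ (-N) := k6
      have eq1 : π ^ N * (a' * |θ|) ^ (-N) * (π / (a * (N - 1)))
          = (π ^ N * (π / (N - 1))) * ((a' * |θ|) ^ (-N) * a⁻¹) := by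
        field_simp
      have hc2 : π ^ N * 2 ^ N * (π / (N - 1)) ≤ π ^ N * 2 ^ N * (1 + π / (N - 1)) := by
        nlinarith [mul_pos hπN h2N]
      calc (π ^ N * (1 + a' * |θ|) ^ (-N)) *
            (∫ φ in (-(|θ|/2))..(|θ|/2), (1 + a * |Real.sin φ|) ^ (-N))
          ≤ (π ^ N * (1 + a' * |θ|) ^ (-N)) * (π / (a * (N - 1))) :=
            mul_le_mul_of_nonneg_left hH2 (by positivity)
        _ ≤ (π ^ N * (a' * |θ|) ^ (-N)) * (π / (a * (N - 1))) :=
            mul_le_mul_of_nonneg_right (mul_le_mul_of_nonneg_left hQle hπN.le)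
              (by positivity)
        _ = (π ^ N * (π / (N - 1))) * ((a' * |θ|) ^ (-N) * a⁻¹) := eq1
        _ ≤ (π ^ N * (π / (N - 1))) * (2 ^ N * a'⁻¹ * (1 + a * |θ|) ^ (-N)) :=
            mul_le_mul_of_nonneg_left claim2
              (mul_nonneg hπN.le (div_nonneg hπ.le hN1.le))
        _ = (π ^ N * 2 ^ N * (π / (N - 1))) * (a'⁻¹ * (1 + a * |θ|) ^ (-N)) := by ring
        _ ≤ (π ^ N * 2 ^ N * (1 + π / (N - 1))) * (a'⁻¹ * (1 + a * |θ|) ^ (-N)) :=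
            mul_le_mul_of_nonneg_right hc2 (by positivity)
        _ = (π ^ N * 2 ^ N * (1 + π / (N - 1))) * a'⁻¹ * (1 + a * |θ|) ^ (-N) := by ring
  -- assemble everything
  have hJAfin := le_trans hJA hcase
  have heq : (π ^ N * (1 + a * |θ|) ^ (-N)) * (π / (a' * (N - 1)))
      = (π ^ N * π / (N - 1)) * a'⁻¹ * (1 + a * |θ|) ^ (-N) := by
    field_simp
  rw [heq] at hB
  rw [hIJ]
  linarith [hB, hJAfin, hsplitJ]

end AngularAux

/-- Angular decay estimate on the torus: for `N > 1` and `|θ| ≤ π/2`,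
`∫_{-π}^{π} (1+a|sin φ|)^{-N} (1+a'|sin(φ+θ)|)^{-N} dφ
  ≲ max(a,a')⁻¹ (1+min(a,a')|θ|)^{-N}`. -/
theorem angular_decay_estimate (N : ℝ) (hN : 1 < N) :
    ∃ C > 0, ∀ a a' θ : ℝ, 0 < a → 0 < a' → |θ| ≤ Real.pi / 2 →
      (∫ φ in (-Real.pi)..Real.pi,
          (1 + a * |Real.sin φ|) ^ (-N) * (1 + a' * |Real.sin (φ + θ)|) ^ (-N))
        ≤ C * (max a a')⁻¹ * (1 + min a a' * |θ|) ^ (-N) := by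
  have hπ := Real.pi_pos
  have hN1 : (0:ℝ) < N - 1 := by linarith
  refine ⟨2 * (π ^ N * 2 ^ N * (1 + π / (N - 1)) + π ^ N * π / (N - 1)), by positivity,
    fun a a' θ ha ha' hθ => ?_⟩
  rcases le_total a a' with h | h
  · rw [min_eq_left h, max_eq_right h]
    exact main_est N hN a a' θ ha ha' h hθ
  · rw [min_eq_right h, max_eq_left h]
    have heq : (∫ φ in (-π)..π,
          (1 + a * |Real.sin φ|) ^ (-N) * (1 + a' * |Real.sin (φ + θ)|) ^ (-N))
        = ∫ φ in (-π)..π,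
          (1 + a' * |Real.sin φ|) ^ (-N) * (1 + a * |Real.sin (φ + -θ)|) ^ (-N) := by
      set g : ℝ → ℝ :=
        fun ψ => (1 + a' * |Real.sin ψ|) ^ (-N) * (1 + a * |Real.sin (ψ + -θ)|) ^ (-N) with hg
      have hcomp : ∀ φ : ℝ, (1 + a * |Real.sin φ|) ^ (-N) * (1 + a' * |Real.sin (φ + θ)|) ^ (-N)
          = g (φ + θ) := by
        intro φ
        rw [hg]
        simp only [show φ + θ + -θ = φ by ring]
        ring
      have h1 : (∫ φ in (-π)..π,
            (1 + a * |Real.sin φ|) ^ (-N) * (1 + a' * |Real.sin (φ + θ)|) ^ (-N))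
          = ∫ φ in (-π)..π, g (φ + θ) := by
        apply intervalIntegral.integral_congr; intro x _; exact hcomp x
      have h2 : (∫ φ in (-π)..π, g (φ + θ)) = ∫ x in (-π + θ)..(π + θ), g x :=
        intervalIntegral.integral_comp_add_right (f := g) θ
      have hper : Function.Periodic g (2 * π) := by
        intro x
        rw [hg]
        simp only
        rw [show x + 2 * π + -θ = (x + -θ) + π + π by ring, show x + 2 * π = x + π + π by ring]
        simp [Real.sin_add_pi]
      have h3 := hper.intervalIntegral_add_eq (-π + θ) (-π)
      rw [show -π + θ + 2 * π = π + θ by ring, show -π + 2 * π = π by ring] at h3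
      rw [h1, h2, h3]
    rw [heq]
    have := main_est N hN a' a (-θ) ha' ha h (by rwa [abs_neg])
    rwa [abs_neg] at this
end

section
/- Let $s\ge 0$ be a real number (a scale), $\theta\in\mathbb{R}$ an angle, and $r>0$, $\varphi\in\mathbb{T}$. Then for every integer $0\le L\le N_2$: $\min(1, 2^{-s}(1+r))^{M}(1+2^{-s}r)^{-N_1}(1+2^{-s/2}r|\sin(\varphi+\theta)|)^{-N_2} \lesssim \min(1,2^{-s}(1+r))^{M-L}(1+2^{s/2}|\sin(\varphi+\theta)|)^{-L}(1+2^{-s}r)^{-N_1}$, with implicit constant independent of $s,\theta,r,\varphi$. -/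
open Real

/-- Decoupling of the radial and angular variables: for `0 ≤ L ≤ N₂`, `L ≤ M`,
`min(1, 2^{-s}(1+r))^M (1+2^{-s}r)^{-N₁} (1+2^{-s/2} r |sin(φ+θ)|)^{-N₂}
  ≲ min(1,2^{-s}(1+r))^{M-L} (1+2^{s/2}|sin(φ+θ)|)^{-L} (1+2^{-s}r)^{-N₁}`,
uniformly in `s, θ, r, φ`. -/
theorem radial_angular_decoupling (M N₁ N₂ L : ℝ)
    (hM : 0 ≤ M) (hN₁ : 0 ≤ N₁) (hL0 : 0 ≤ L) (hLN₂ : L ≤ N₂) (hLM : L ≤ M) :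
    ∃ C > 0, ∀ s θ r φ : ℝ, 0 ≤ s → 0 < r →
      (min 1 ((2 : ℝ) ^ (-s) * (1 + r))) ^ M * (1 + (2 : ℝ) ^ (-s) * r) ^ (-N₁) *
          (1 + (2 : ℝ) ^ (-s / 2) * r * |Real.sin (φ + θ)|) ^ (-N₂)
        ≤ C * (min 1 ((2 : ℝ) ^ (-s) * (1 + r))) ^ (M - L) *
            (1 + (2 : ℝ) ^ (s / 2) * |Real.sin (φ + θ)|) ^ (-L) *
            (1 + (2 : ℝ) ^ (-s) * r) ^ (-N₁) := by
  refine ⟨(2:ℝ) ^ L, Real.rpow_pos_of_pos two_pos L, fun s θ r φ hs hr => ?_⟩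
  set t := |Real.sin (φ + θ)| with ht
  have ht0 : 0 ≤ t := abs_nonneg _
  have ht1 : t ≤ 1 := abs_le.mpr ⟨Real.neg_one_le_sin _, Real.sin_le_one _⟩
  have hx : (0:ℝ) < (2:ℝ) ^ (-s) := Real.rpow_pos_of_pos two_pos _
  set m := min 1 ((2:ℝ) ^ (-s) * (1 + r)) with hm_def
  have hm : 0 < m := lt_min one_pos (by positivity)
  set A := 1 + (2:ℝ) ^ (s/2) * t with hA_def
  set B := 1 + (2:ℝ) ^ (-s/2) * r * t with hB_def
  have hst : 0 ≤ (2:ℝ) ^ (s/2) * t := by positivity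
  have hrt : 0 ≤ (2:ℝ) ^ (-s/2) * r * t := by positivity
  have hA : (1:ℝ) ≤ A := by rw [hA_def]; linarith
  have hB : (1:ℝ) ≤ B := by rw [hB_def]; linarith
  have hA0 : (0:ℝ) < A := lt_of_lt_of_le one_pos hA
  have hB0 : (0:ℝ) < B := lt_of_lt_of_le one_pos hB
  have hy1 : (2:ℝ) ^ (-s/2) ≤ 1 :=
    Real.rpow_le_one_of_one_le_of_nonpos one_le_two (by linarith)
  have hmul : (2:ℝ) ^ (-s) * (2:ℝ) ^ (s/2) = (2:ℝ) ^ (-s/2) := by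
    rw [← Real.rpow_add two_pos]; ring_nf
  have key : m * A ≤ 2 * B := by
    have h1 : m ≤ 1 := min_le_left _ _
    have h2 : m ≤ (2:ℝ) ^ (-s) * (1 + r) := min_le_right _ _
    have h3 : m * ((2:ℝ)^(s/2) * t) ≤ (2:ℝ)^(-s) * (1+r) * ((2:ℝ)^(s/2)*t) :=
      mul_le_mul_of_nonneg_right h2 (by positivity)
    have h4 : (2:ℝ)^(-s) * (1+r) * ((2:ℝ)^(s/2)*t)
        = (2:ℝ)^(-s/2)*t + (2:ℝ)^(-s/2)*r*t := by
      rw [← hmul]; ring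
    have h5 : (2:ℝ)^(-s/2)*t ≤ 1 := by
      calc (2:ℝ)^(-s/2)*t ≤ 1*1 := mul_le_mul hy1 ht1 ht0 zero_le_one
      _ = 1 := mul_one 1
    calc m * A = m + m * ((2:ℝ)^(s/2)*t) := by rw [hA_def]; ring
    _ ≤ 1 + ((2:ℝ)^(-s/2)*t + (2:ℝ)^(-s/2)*r*t) := by rw [← h4]; linarith
    _ ≤ 2 * B := by rw [hB_def]; linarith [hrt, h5]
  have hX : (0:ℝ) < (1 + (2:ℝ)^(-s) * r) ^ (-N₁) :=
    Real.rpow_pos_of_pos (by positivity) _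
  have main : m ^ M * B ^ (-N₂) ≤ (2:ℝ)^L * m ^ (M-L) * A ^ (-L) := by
    have step1 : B ^ (-N₂) ≤ B ^ (-L) :=
      Real.rpow_le_rpow_of_exponent_le hB (by linarith)
    have hms : m ^ M = m ^ (M - L) * m ^ L := by
      rw [← Real.rpow_add hm]; ring_nf
    have hBL : B ^ (-L) = (B⁻¹) ^ L := by
      rw [Real.rpow_neg hB0.le, ← Real.inv_rpow hB0.le]
    have hAL : A ^ (-L) = (A⁻¹) ^ L := by
      rw [Real.rpow_neg hA0.le, ← Real.inv_rpow hA0.le]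
    have hdiv : m * B⁻¹ ≤ 2 * A⁻¹ := by
      rw [mul_inv_le_iff₀ hB0]
      calc m ≤ m * A * A⁻¹ := by
              rw [mul_assoc, mul_inv_cancel₀ hA0.ne', mul_one]
      _ ≤ 2 * B * A⁻¹ := mul_le_mul_of_nonneg_right key (by positivity)
      _ = 2 * A⁻¹ * B := by ring
    have hpow : (m * B⁻¹) ^ L ≤ (2 * A⁻¹) ^ L :=
      Real.rpow_le_rpow (by positivity) hdiv hL0
    calc m ^ M * B ^ (-N₂) ≤ m ^ M * B ^ (-L) :=
          mul_le_mul_of_nonneg_left step1 (Real.rpow_pos_of_pos hm M).le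
    _ = m ^ (M-L) * (m ^ L * (B⁻¹) ^ L) := by rw [hms, hBL]; ring
    _ = m ^ (M-L) * (m * B⁻¹) ^ L := by
          rw [Real.mul_rpow hm.le (by positivity)]
    _ ≤ m ^ (M-L) * (2 * A⁻¹) ^ L :=
          mul_le_mul_of_nonneg_left hpow (Real.rpow_pos_of_pos hm _).le
    _ = m ^ (M-L) * ((2:ℝ)^L * (A⁻¹) ^ L) := by
          rw [Real.mul_rpow (by norm_num) (by positivity)]
    _ = (2:ℝ)^L * m ^ (M-L) * A ^ (-L) := by rw [hAL]; ring
  calc m ^ M * (1 + (2:ℝ)^(-s) * r) ^ (-N₁) * B ^ (-N₂)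
      = (m ^ M * B ^ (-N₂)) * (1 + (2:ℝ)^(-s) * r) ^ (-N₁) := by ring
  _ ≤ ((2:ℝ)^L * m ^ (M-L) * A ^ (-L)) * (1 + (2:ℝ)^(-s) * r) ^ (-N₁) :=
      mul_le_mul_of_nonneg_right main hX.le
  _ = (2:ℝ)^L * m ^ (M-L) * A ^ (-L) * (1 + (2:ℝ)^(-s) * r) ^ (-N₁) := by ring
end

section
/- Let $s\ge 0$, $r>0$, $t\in[0,1]$ (representing $|\sin(\varphi+\theta)|$). Then $\frac{\min(1, 2^{-s}(1+r))}{1+2^{-s/2}\,r\,t} \le C\,(1+2^{s/2}t)^{-1}$ for an absolute constant $C$. -/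
open Real

/-- Core pointwise estimate: for `s ≥ 0`, `r > 0`, `t ∈ [0,1]`,
`min(1, 2^{-s}(1+r)) / (1 + 2^{-s/2} r t) ≤ C (1 + 2^{s/2} t)⁻¹`. -/
theorem core_decoupling_estimate :
    ∃ C > 0, ∀ s r t : ℝ, 0 ≤ s → 0 < r → t ∈ Set.Icc (0 : ℝ) 1 →
      min 1 ((2 : ℝ) ^ (-s) * (1 + r)) / (1 + (2 : ℝ) ^ (-s / 2) * r * t)
        ≤ C * (1 + (2 : ℝ) ^ (s / 2) * t)⁻¹ := by
  refine ⟨3, by norm_num, fun s r t hs hr ht => ?_⟩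
  obtain ⟨ht0, ht1⟩ := ht
  set a : ℝ := (2 : ℝ) ^ (s / 2) with ha_def
  have ha1 : 1 ≤ a := Real.one_le_rpow (by norm_num) (by linarith)
  have ha0 : 0 < a := lt_of_lt_of_le one_pos ha1
  have h1 : (2 : ℝ) ^ (-s / 2) = a⁻¹ := by
    rw [show -s / 2 = -(s / 2) by ring, Real.rpow_neg (by norm_num)]
  have h2 : (2 : ℝ) ^ (-s) = a⁻¹ * a⁻¹ := by
    rw [show -s = -(s / 2) + -(s / 2) by ring, Real.rpow_add (by norm_num),
      Real.rpow_neg (by norm_num)]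
  rw [h1, h2]
  have hD : 0 < 1 + a⁻¹ * r * t := by positivity
  have hE : 0 < 1 + a * t := by positivity
  rw [show (3:ℝ) * (1 + a * t)⁻¹ = 3 / (1 + a * t) from (div_eq_mul_inv _ _).symm,
    div_le_div_iff₀ hD hE]
  have ha2 : a * (a⁻¹) = 1 := mul_inv_cancel₀ (ne_of_gt ha0)
  rcases le_total (a * a) r with h | h
  · have hm : min 1 (a⁻¹ * a⁻¹ * (1 + r)) ≤ 1 := min_le_left _ _
    have key : 1 + a * t ≤ 1 + a⁻¹ * r * t := by
      have : a * t ≤ a⁻¹ * r * t := by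
        have : a ≤ a⁻¹ * r := by
          have := mul_le_mul_of_nonneg_left h (le_of_lt (inv_pos.mpr ha0))
          nlinarith
        nlinarith
      linarith
    have := mul_le_mul_of_nonneg_right hm (le_of_lt hE)
    nlinarith
  · have hm : min 1 (a⁻¹ * a⁻¹ * (1 + r)) ≤ a⁻¹ * a⁻¹ * (1 + r) := min_le_right _ _
    have := mul_le_mul_of_nonneg_right hm (le_of_lt hE)
    have hinv : 0 < a⁻¹ := inv_pos.mpr ha0
    -- (1+r)(1+at)/a² ≤ 3(1 + rt/a)
    have key : a⁻¹ * a⁻¹ * (1 + r) * (1 + a * t) ≤ 3 * (1 + a⁻¹ * r * t) := by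
      have h1a : a⁻¹ ≤ 1 := by
        rw [inv_le_one_iff₀]; right; exact ha1
      nlinarith [mul_pos hinv hinv, mul_nonneg (mul_nonneg hinv.le hinv.le) hr.le,
        mul_nonneg hr.le ht0, mul_nonneg (mul_nonneg hinv.le hr.le) ht0,
        mul_le_one₀ h1a ht0 ht1, sq_nonneg (a - 1), sq_nonneg (a*t - 1),
        mul_nonneg ht0 (sub_nonneg.mpr ha1)]
    linarith
end

section
/- Let $0\le s_\lambda \le s_\mu$ be scales and let $M, N_1, A > 0$ satisfy $M > A - 5/4$ and $N_1 \ge A + 3/4$, with additionally $N_1 \ge M+2$. Then $2^{-2s_\mu}\int_0^\infty \min(1,2^{-s_\lambda}(1+r))^M \min(1,2^{-s_\mu}(1+r))^M (1+2^{-s_\lambda}r)^{-N_1}(1+2^{-s_\mu}r)^{-N_1}\, r\,dr \lesssim 2^{-(A+3/4)(s_\mu - s_\lambda)}$, with implicit constant independent of $s_\lambda, s_\mu$. -/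
open MeasureTheory Real

set_option maxHeartbeats 1000000

/-- Radial estimate: for scales `0 ≤ s_λ ≤ s_μ` and parameters `M > A - 5/4`,
`N₁ ≥ A + 3/4`, `N₁ ≥ M + 2`,
`2^{-2s_μ} ∫₀^∞ min(1,2^{-s_λ}(1+r))^M min(1,2^{-s_μ}(1+r))^M
  (1+2^{-s_λ}r)^{-N₁} (1+2^{-s_μ}r)^{-N₁} r dr ≲ 2^{-(A+3/4)(s_μ-s_λ)}`. -/
theorem radial_integral_estimate (M N₁ A : ℝ) (hM : 0 < M) (hN₁ : 0 < N₁) (hA : 0 < A)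
    (hMA : A - 5 / 4 < M) (hN₁A : A + 3 / 4 ≤ N₁) (hN₁M : M + 2 ≤ N₁) :
    ∃ C > 0, ∀ sl sm : ℝ, 0 ≤ sl → sl ≤ sm →
      (2 : ℝ) ^ (-(2 * sm)) *
        (∫ r in Set.Ioi (0 : ℝ),
          (min 1 ((2 : ℝ) ^ (-sl) * (1 + r))) ^ M * (min 1 ((2 : ℝ) ^ (-sm) * (1 + r))) ^ M *
            (1 + (2 : ℝ) ^ (-sl) * r) ^ (-N₁) * (1 + (2 : ℝ) ^ (-sm) * r) ^ (-N₁) * r)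
        ≤ C * (2 : ℝ) ^ (-(A + 3 / 4) * (sm - sl)) := by
  set θ : ℝ := max 0 ((A - 5 / 4 + M) / 2) with hθdef
  have hθ0 : 0 ≤ θ := le_max_left _ _
  have hθM : θ ≤ M := max_le hM.le (by linarith)
  have hθA : A - 5 / 4 ≤ θ := le_trans (by linarith) (le_max_right 0 ((A - 5 / 4 + M) / 2))
  have hθN : θ < N₁ - 2 := by
    rcases le_or_gt ((A - 5 / 4 + M) / 2) 0 with h | h
    · rw [hθdef, max_eq_left h]; linarith
    · rw [hθdef, max_eq_right h.le]; linarith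
  set p : ℝ := θ - N₁ with hpdef
  have hp2 : p < -2 := by simp only [hpdef]; linarith
  have hp0 : p ≤ 0 := by linarith
  -- integrability of the model function
  have hInt : IntegrableOn (fun t : ℝ => (1 + t) ^ p * t) (Set.Ioi 0) := by
    have hIcc : IntegrableOn (fun t : ℝ => (1 + t) ^ p * t) (Set.Icc (0 : ℝ) 1) := by
      apply ContinuousOn.integrableOn_Icc
      exact (((continuousOn_const.add continuousOn_id).rpow_const
        (fun t ht => Or.inl (by
          rw [Set.mem_Icc] at ht
          exact (by linarith [ht.1] : (0:ℝ) < 1 + t).ne'))).mul continuousOn_id)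
    have hIoi : IntegrableOn (fun t : ℝ => (1 + t) ^ p * t) (Set.Ioi (1 : ℝ)) := by
      have h1 : IntegrableOn (fun t : ℝ => t ^ (p + 1)) (Set.Ioi (1 : ℝ)) :=
        integrableOn_Ioi_rpow_of_lt (by linarith) one_pos
      refine h1.mono' ?_ ?_
      · refine ContinuousOn.aestronglyMeasurable ?_ measurableSet_Ioi
        exact ((continuousOn_const.add continuousOn_id).rpow_const
          (fun t ht => Or.inl (by
            rw [Set.mem_Ioi] at ht
            exact (by linarith : (0:ℝ) < 1 + t).ne'))).mul continuousOn_id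
      · filter_upwards [ae_restrict_mem measurableSet_Ioi] with t ht
        have ht1 : (1 : ℝ) < t := ht
        have h0t : (0 : ℝ) < t := by linarith
        rw [Real.norm_eq_abs, abs_of_nonneg (mul_nonneg (rpow_nonneg (by linarith) _) h0t.le)]
        rw [Real.rpow_add_one h0t.ne']
        exact mul_le_mul_of_nonneg_right
          (Real.rpow_le_rpow_of_nonpos h0t (by linarith) hp0) h0t.le
    rw [← Set.Ioc_union_Ioi_eq_Ioi (zero_le_one (α := ℝ))]
    exact (hIcc.mono_set Set.Ioc_subset_Icc_self).union hIoi
  set C₀ : ℝ := ∫ t in Set.Ioi (0 : ℝ), (1 + t) ^ p * t with hC₀def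
  have hC₀0 : 0 ≤ C₀ :=
    setIntegral_nonneg measurableSet_Ioi
      (fun t ht => mul_nonneg (rpow_nonneg (by simp at ht; linarith) _) (le_of_lt ht))
  refine ⟨C₀ + 1, by linarith, ?_⟩
  intro sl sm hsl hsm
  set a : ℝ := (2 : ℝ) ^ (-sl) with hadef
  set b : ℝ := (2 : ℝ) ^ (-sm) with hbdef
  have ha0 : 0 < a := rpow_pos_of_pos two_pos _
  have hb0 : 0 < b := rpow_pos_of_pos two_pos _
  have hba : b ≤ a := rpow_le_rpow_of_exponent_le one_le_two (by linarith)
  have ha1 : a ≤ 1 := rpow_le_one_of_one_le_of_nonpos one_le_two (by linarith)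
  -- integrability of the dominating function
  have h5 : IntegrableOn (fun x : ℝ => (1 + a * x) ^ p * x) (Set.Ioi 0) := by
    have h6 : IntegrableOn (fun x : ℝ => a⁻¹ * ((1 + a * x) ^ p * (a * x))) (Set.Ioi 0) :=
      ((integrableOn_Ioi_comp_mul_left_iff (fun t : ℝ => (1 + t) ^ p * t) 0
      ha0).mpr (by simpa using hInt)).const_mul a⁻¹
    refine h6.congr_fun (fun x hx => ?_) measurableSet_Ioi
    field_simp
  have hg : IntegrableOn (fun r : ℝ => (b / a) ^ θ * ((1 + a * r) ^ p * r)) (Set.Ioi 0) :=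
    h5.const_mul _
  -- pointwise bound
  have hpt : ∀ r ∈ Set.Ioi (0 : ℝ),
      (min 1 (a * (1 + r))) ^ M * (min 1 (b * (1 + r))) ^ M *
        (1 + a * r) ^ (-N₁) * (1 + b * r) ^ (-N₁) * r
      ≤ (b / a) ^ θ * ((1 + a * r) ^ p * r) := by
    intro r hr
    have hr0 : (0 : ℝ) < r := hr
    have h1r : (0 : ℝ) < 1 + r := by linarith
    have har : (0 : ℝ) < 1 + a * r := by positivity
    have hbr : (0 : ℝ) < 1 + b * r := by positivity
    have hm1 : (min 1 (a * (1 + r))) ^ M ≤ 1 :=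
      Real.rpow_le_one (le_min zero_le_one (by positivity)) (min_le_left _ _) hM.le
    have hm2 : (min 1 (b * (1 + r))) ^ M ≤ (b * (1 + r)) ^ θ := by
      calc (min 1 (b * (1 + r))) ^ M ≤ (min 1 (b * (1 + r))) ^ θ :=
            Real.rpow_le_rpow_of_exponent_ge (lt_min one_pos (by positivity))
              (min_le_left _ _) hθM
        _ ≤ (b * (1 + r)) ^ θ :=
            Real.rpow_le_rpow (le_min zero_le_one (by positivity)) (min_le_right _ _) hθ0
    have hA2 : (1 + b * r) ^ (-N₁) ≤ 1 :=
      rpow_le_one_of_one_le_of_nonpos (by nlinarith) (by linarith)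
    have step1 : (min 1 (a * (1 + r))) ^ M * (min 1 (b * (1 + r))) ^ M *
        (1 + a * r) ^ (-N₁) * (1 + b * r) ^ (-N₁) * r
        ≤ (b * (1 + r)) ^ θ * (1 + a * r) ^ (-N₁) * r := by
      have hA1 : (0 : ℝ) ≤ (1 + a * r) ^ (-N₁) := rpow_nonneg har.le _
      calc (min 1 (a * (1 + r))) ^ M * (min 1 (b * (1 + r))) ^ M *
            (1 + a * r) ^ (-N₁) * (1 + b * r) ^ (-N₁) * r
          ≤ 1 * ((b * (1 + r)) ^ θ) * (1 + a * r) ^ (-N₁) * 1 * r := by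
            gcongr
            all_goals exact rpow_nonneg (le_min zero_le_one (by positivity)) _
        _ = (b * (1 + r)) ^ θ * (1 + a * r) ^ (-N₁) * r := by ring
    have step2 : (b * (1 + r)) ^ θ * (1 + a * r) ^ (-N₁)
        ≤ (b / a) ^ θ * (1 + a * r) ^ p := by
      have key : b * (1 + r) ≤ (b / a) * (1 + a * r) := by
        rw [div_mul_eq_mul_div, le_div_iff₀ ha0]
        nlinarith [mul_nonneg hb0.le hr0.le]
      calc (b * (1 + r)) ^ θ * (1 + a * r) ^ (-N₁)
          ≤ ((b / a) * (1 + a * r)) ^ θ * (1 + a * r) ^ (-N₁) := by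
            gcongr
            all_goals exact Real.rpow_le_rpow (by positivity) key hθ0
        _ = (b / a) ^ θ * ((1 + a * r) ^ θ * (1 + a * r) ^ (-N₁)) := by
            rw [Real.mul_rpow (by positivity) har.le]; ring
        _ = (b / a) ^ θ * (1 + a * r) ^ p := by
            rw [← Real.rpow_add har, hpdef, sub_eq_add_neg]
    calc (min 1 (a * (1 + r))) ^ M * (min 1 (b * (1 + r))) ^ M *
          (1 + a * r) ^ (-N₁) * (1 + b * r) ^ (-N₁) * r
        ≤ (b * (1 + r)) ^ θ * (1 + a * r) ^ (-N₁) * r := step1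
      _ ≤ (b / a) ^ θ * (1 + a * r) ^ p * r :=
          mul_le_mul_of_nonneg_right step2 hr0.le
      _ = (b / a) ^ θ * ((1 + a * r) ^ p * r) := by ring
  -- integral comparison
  have hle : (∫ r in Set.Ioi (0 : ℝ),
      (min 1 (a * (1 + r))) ^ M * (min 1 (b * (1 + r))) ^ M *
        (1 + a * r) ^ (-N₁) * (1 + b * r) ^ (-N₁) * r)
      ≤ ∫ r in Set.Ioi (0 : ℝ), (b / a) ^ θ * ((1 + a * r) ^ p * r) := by
    refine integral_mono_of_nonneg ?_ hg ?_
    · filter_upwards [ae_restrict_mem measurableSet_Ioi] with r hr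
      have hr0 : (0 : ℝ) < r := hr
      have h1r : (0 : ℝ) < 1 + r := by linarith
      have : (0 : ℝ) ≤ min 1 (a * (1 + r)) := le_min zero_le_one (by positivity)
      have : (0 : ℝ) ≤ min 1 (b * (1 + r)) := le_min zero_le_one (by positivity)
      have har : (0 : ℝ) < 1 + a * r := by positivity
      have hbr : (0 : ℝ) < 1 + b * r := by positivity
      positivity
    · filter_upwards [ae_restrict_mem measurableSet_Ioi] with r hr
      exact hpt r hr
  -- value of the dominating integral
  have hval : (∫ r in Set.Ioi (0 : ℝ), (1 + a * r) ^ p * r) = a⁻¹ * a⁻¹ * C₀ := by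
    have h7 := integral_comp_mul_left_Ioi (fun t : ℝ => (1 + t) ^ p * t) 0 ha0
    simp only [mul_zero, smul_eq_mul] at h7
    have h8 : (∫ x in Set.Ioi (0 : ℝ), (1 + a * x) ^ p * (a * x))
        = a * ∫ x in Set.Ioi (0 : ℝ), (1 + a * x) ^ p * x := by
      rw [← integral_const_mul]
      congr 1
      ext x
      ring
    rw [h8] at h7
    rw [← hC₀def] at h7
    have ha' : a ≠ 0 := ha0.ne'
    field_simp at h7 ⊢
    linarith [h7]
  have hvalg : (∫ r in Set.Ioi (0 : ℝ), (b / a) ^ θ * ((1 + a * r) ^ p * r))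
      = (b / a) ^ θ * (a⁻¹ * a⁻¹ * C₀) := by
    rw [integral_const_mul, hval]
  -- put everything together
  have hb2 : (2 : ℝ) ^ (-(2 * sm)) = b * b := by
    rw [show -(2 * sm) = -sm + -sm by ring, Real.rpow_add two_pos]
  have hfrac : b / a = (2 : ℝ) ^ (sl - sm) := by
    rw [hadef, hbdef, ← Real.rpow_sub two_pos]
    ring_nf
  have hpow : (b / a) ^ (θ + 2) ≤ (2 : ℝ) ^ (-(A + 3 / 4) * (sm - sl)) := by
    have hba1 : b / a ≤ 1 := div_le_one_of_le₀ hba ha0.le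
    have h9 : (b / a) ^ (θ + 2) ≤ (b / a) ^ (A + 3 / 4) :=
      rpow_le_rpow_of_exponent_ge (div_pos hb0 ha0) hba1 (by linarith)
    have h10 : (b / a) ^ (A + 3 / 4) = (2 : ℝ) ^ (-(A + 3 / 4) * (sm - sl)) := by
      rw [hfrac, ← Real.rpow_mul (by norm_num : (0:ℝ) ≤ 2)]
      congr 1
      ring
    rw [← h10]; exact h9
  have hsq : (b / a) ^ (2 : ℝ) = (b / a) * (b / a) := by
    rw [show (2 : ℝ) = ((2 : ℕ) : ℝ) by norm_num, Real.rpow_natCast]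
    ring
  have hrpos : (0 : ℝ) < (2 : ℝ) ^ (-(A + 3 / 4) * (sm - sl)) := rpow_pos_of_pos two_pos _
  calc (2 : ℝ) ^ (-(2 * sm)) *
        (∫ r in Set.Ioi (0 : ℝ),
          (min 1 (a * (1 + r))) ^ M * (min 1 (b * (1 + r))) ^ M *
            (1 + a * r) ^ (-N₁) * (1 + b * r) ^ (-N₁) * r)
      ≤ (b * b) * ((b / a) ^ θ * (a⁻¹ * a⁻¹ * C₀)) := by
        rw [hb2, ← hvalg]
        exact mul_le_mul_of_nonneg_left hle (by positivity)
    _ = C₀ * ((b / a) ^ (θ + 2)) := by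
        rw [Real.rpow_add (div_pos hb0 ha0), hsq]
        field_simp
    _ ≤ C₀ * ((2 : ℝ) ^ (-(A + 3 / 4) * (sm - sl))) := mul_le_mul_of_nonneg_left hpow hC₀0
    _ ≤ (C₀ + 1) * (2 : ℝ) ^ (-(A + 3 / 4) * (sm - sl)) := by nlinarith
end

section
/- Define on the curvelet parameter space the distance $d(\lambda,\mu) := |\theta_\lambda-\theta_\mu|^2 + |x_\lambda-x_\mu|^2 + |\langle e_{\lambda}, x_\lambda - x_\mu\rangle|$ where $e_\lambda = (\cos\theta_\lambda,\sin\theta_\lambda)^\top$, and the index distance $\omega(\lambda,\mu) := 2^{|s_\lambda-s_\mu|}(1+2^{\min(s_\lambda,s_\mu)}d(\lambda,\mu))$. Assume for every integer $j\ge 0$, every $q\in\mathbb{R}$ and every index $\mu$ the level estimate $\sum_{\lambda\in\Lambda, s_\lambda=j}(1+2^q d(\mu,\lambda))^{-2} \le C\,2^{2(j-q)_+}$ holds. Then for every $k>2$, $\sup_{\mu}\sum_{\lambda\in\Lambda}\omega(\mu,\lambda)^{-k} < \infty$. -/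
open Real

variable {Λ : Type*}

/-- The pseudo-distance `d(λ,μ)` on the parameter space
`(scale, angle, location) ∈ ℤ≥0 × 𝕋 × ℝ²`. -/
noncomputable def paramDist (θ : Λ → ℝ) (x : Λ → ℝ × ℝ) (a b : Λ) : ℝ :=
  |θ a - θ b| ^ 2 + (((x a).1 - (x b).1) ^ 2 + ((x a).2 - (x b).2) ^ 2) +
    |Real.cos (θ a) * ((x a).1 - (x b).1) + Real.sin (θ a) * ((x a).2 - (x b).2)|

/-- The index distance `ω(λ,μ) = 2^{|s_λ-s_μ|} (1 + 2^{min(s_λ,s_μ)} d(λ,μ))`. -/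
noncomputable def indexDist (s : Λ → ℕ) (θ : Λ → ℝ) (x : Λ → ℝ × ℝ) (a b : Λ) : ℝ :=
  2 ^ |(s a : ℝ) - (s b : ℝ)| *
    (1 + 2 ^ (min (s a : ℝ) (s b : ℝ)) * paramDist θ x a b)

lemma paramDist_nonneg (θ : Λ → ℝ) (x : Λ → ℝ × ℝ) (a b : Λ) : 0 ≤ paramDist θ x a b := by
  unfold paramDist; positivity

/-- If each scale level satisfies the estimate
`∑_{s_λ = j} (1 + 2^q d(μ,λ))^{-2} ≤ C 2^{2(j-q)₊}`, then for every `k > 2`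
the sums `∑_λ ω(μ,λ)^{-k}` are finite, uniformly in `μ`. -/
theorem admissibility_from_level_estimate
    (s : Λ → ℕ) (θ : Λ → ℝ) (x : Λ → ℝ × ℝ) (C : ℝ) (hC : 0 < C)
    (hlevel : ∀ (j : ℕ) (q : ℝ) (μ : Λ),
      Summable (fun lam : {l : Λ // s l = j} =>
        (1 + 2 ^ q * paramDist θ x μ lam) ^ (-(2 : ℝ))) ∧
      (∑' lam : {l : Λ // s l = j}, (1 + 2 ^ q * paramDist θ x μ lam) ^ (-(2 : ℝ)))
        ≤ C * 2 ^ (2 * max ((j : ℝ) - q) 0)) :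
    ∀ k : ℝ, 2 < k →
      (∀ μ : Λ, Summable fun lam => indexDist s θ x μ lam ^ (-k)) ∧
      ∃ B : ℝ, ∀ μ : Λ, (∑' lam, indexDist s θ x μ lam ^ (-k)) ≤ B := by
  intro k hk
  -- geometric ratio
  set r : ℝ := (2 : ℝ) ^ (-(k - 2)) with hrdef
  have hr0 : 0 < r := Real.rpow_pos_of_pos (by norm_num) _
  have hr1 : r < 1 := Real.rpow_lt_one_of_one_lt_of_neg (by norm_num) (by linarith)
  -- the dominating function over ℤ
  set H : ℤ → ℝ := fun n => C * (2 : ℝ) ^ (-(k - 2) * |(n : ℝ)|) with hHdef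
  have hHnonneg : ∀ n, 0 ≤ H n := fun n => by
    have := Real.rpow_pos_of_pos (show (0:ℝ) < 2 by norm_num) (-(k - 2) * |(n : ℝ)|)
    positivity
  have hnat : ∀ n : ℕ, (2 : ℝ) ^ (-(k - 2) * (n : ℝ)) = r ^ n := fun n => by
    rw [Real.rpow_mul (by norm_num : (0:ℝ) ≤ 2), Real.rpow_natCast]
  have hHsum : Summable H := by
    have hg : Summable (fun n : ℕ => C * r ^ n) :=
      (summable_geometric_of_lt_one hr0.le hr1).mul_left C
    apply Summable.of_nat_of_neg
    · refine hg.congr fun n => ?_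
      simp only [hHdef, Int.cast_natCast]
      rw [abs_of_nonneg (by positivity : (0:ℝ) ≤ (n:ℝ)), hnat n]
    · refine hg.congr fun n => ?_
      simp only [hHdef, Int.cast_neg, Int.cast_natCast, abs_neg]
      rw [abs_of_nonneg (by positivity : (0:ℝ) ≤ (n:ℝ)), hnat n]
  have main : ∀ μ : Λ, (Summable fun lam => indexDist s θ x μ lam ^ (-k)) ∧
      (∑' lam, indexDist s θ x μ lam ^ (-k)) ≤ ∑' n, H n := by
    intro μ
    set m : ℝ := (s μ : ℝ) with hm
    set F : Λ → ℝ := fun lam => indexDist s θ x μ lam ^ (-k) with hFdef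
    have hid_pos : ∀ lam, 0 < indexDist s θ x μ lam := by
      intro lam
      have h1 : (0:ℝ) < 2 ^ |(s μ : ℝ) - (s lam : ℝ)| := Real.rpow_pos_of_pos (by norm_num) _
      have h2 : 0 ≤ (2:ℝ) ^ (min (s μ : ℝ) (s lam : ℝ)) * paramDist θ x μ lam := by
        have := paramDist_nonneg θ x μ lam
        have := Real.rpow_pos_of_pos (show (0:ℝ) < 2 by norm_num) (min (s μ : ℝ) (s lam : ℝ))
        positivity
      have : (0:ℝ) < 1 + 2 ^ (min (s μ : ℝ) (s lam : ℝ)) * paramDist θ x μ lam := by linarith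
      exact mul_pos h1 this
    have hF0 : ∀ lam, 0 ≤ F lam := fun lam => Real.rpow_nonneg (hid_pos lam).le _
    -- pointwise bound on level j
    have hpt : ∀ (j : ℕ) (lam : {l : Λ // s l = j}),
        F lam.1 ≤ (2 : ℝ) ^ (-k * |m - (j : ℝ)|) *
          (1 + 2 ^ (min m (j : ℝ)) * paramDist θ x μ lam.1) ^ (-(2:ℝ)) := by
      intro j lam
      obtain ⟨l, hl⟩ := lam
      have hd := paramDist_nonneg θ x μ l
      have h2q : (0:ℝ) < 2 ^ (min m (j : ℝ)) := Real.rpow_pos_of_pos (by norm_num) _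
      have hb1 : (1:ℝ) ≤ 1 + 2 ^ (min m (j : ℝ)) * paramDist θ x μ l := by nlinarith
      have hid : indexDist s θ x μ l =
          2 ^ |m - (j : ℝ)| * (1 + 2 ^ (min m (j : ℝ)) * paramDist θ x μ l) := by
        simp [indexDist, hl, hm]
      simp only [hFdef, hid]
      rw [Real.mul_rpow (Real.rpow_pos_of_pos (by norm_num) _).le (by linarith),
        ← Real.rpow_mul (by norm_num : (0:ℝ) ≤ 2), mul_comm |m - (j:ℝ)| (-k)]
      exact mul_le_mul_of_nonneg_left
        (Real.rpow_le_rpow_of_exponent_le hb1 (by linarith))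
        (Real.rpow_pos_of_pos (by norm_num) _).le
    -- fiber summability and sum bound
    have hfib : ∀ j : ℕ, Summable (fun lam : {l : Λ // s l = j} => F lam.1) ∧
        (∑' lam : {l : Λ // s l = j}, F lam.1) ≤ H ((j : ℤ) - (s μ : ℤ)) := by
      intro j
      obtain ⟨hGsum, hGle⟩ := hlevel j (min m (j : ℝ)) μ
      have hGsum' : Summable (fun lam : {l : Λ // s l = j} =>
          (2 : ℝ) ^ (-k * |m - (j : ℝ)|) *
            (1 + 2 ^ (min m (j : ℝ)) * paramDist θ x μ lam.1) ^ (-(2:ℝ))) :=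
        hGsum.mul_left _
      have hsF : Summable (fun lam : {l : Λ // s l = j} => F lam.1) :=
        Summable.of_nonneg_of_le (fun lam => hF0 lam.1) (hpt j) hGsum'
      refine ⟨hsF, ?_⟩
      have h1 : (∑' lam : {l : Λ // s l = j}, F lam.1) ≤
          (2 : ℝ) ^ (-k * |m - (j : ℝ)|) *
            ∑' lam : {l : Λ // s l = j},
              (1 + 2 ^ (min m (j : ℝ)) * paramDist θ x μ lam.1) ^ (-(2:ℝ)) := by
        rw [← tsum_mul_left]
        exact Summable.tsum_le_tsum (hpt j) hsF hGsum'
      have h2 : (2 : ℝ) ^ (-k * |m - (j : ℝ)|) *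
            (∑' lam : {l : Λ // s l = j},
              (1 + 2 ^ (min m (j : ℝ)) * paramDist θ x μ lam.1) ^ (-(2:ℝ)))
          ≤ (2 : ℝ) ^ (-k * |m - (j : ℝ)|) * (C * 2 ^ (2 * max ((j : ℝ) - min m (j : ℝ)) 0)) :=
        mul_le_mul_of_nonneg_left hGle (Real.rpow_pos_of_pos (by norm_num) _).le
      have h3 : (2 : ℝ) ^ (-k * |m - (j : ℝ)|) * (C * 2 ^ (2 * max ((j : ℝ) - min m (j : ℝ)) 0))
          ≤ H ((j : ℤ) - (s μ : ℤ)) := by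
        have hcast : ((((j : ℤ) - (s μ : ℤ)) : ℤ) : ℝ) = (j : ℝ) - m := by
          push_cast [hm]; ring
        simp only [hHdef, hcast]
        rw [mul_comm ((2:ℝ) ^ (-k * |m - (j : ℝ)|)), mul_assoc,
          ← Real.rpow_add (by norm_num : (0:ℝ) < 2)]
        refine mul_le_mul_of_nonneg_left
          (Real.rpow_le_rpow_of_exponent_le (by norm_num) ?_) hC.le
        have habs : |(j : ℝ) - m| = |m - (j : ℝ)| := abs_sub_comm _ _
        have hMle : max ((j : ℝ) - min m (j : ℝ)) 0 ≤ |m - (j : ℝ)| := by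
          rcases le_total m (j : ℝ) with h | h
          · rw [min_eq_left h, max_eq_left (by linarith), abs_of_nonpos (by linarith)]
            linarith
          · rw [min_eq_right h, sub_self, max_self]
            exact abs_nonneg _
        rw [habs]
        nlinarith [abs_nonneg (m - (j:ℝ))]
      linarith
    -- assemble over the sigma type
    set e := Equiv.sigmaFiberEquiv s with hedef
    have hsig0 : ∀ p : (j : ℕ) × {l : Λ // s l = j}, 0 ≤ F (e p) := fun p => hF0 _
    have hinj : Function.Injective (fun j : ℕ => (j : ℤ) - (s μ : ℤ)) := by
      intro a b hab
      simpa using sub_left_injective hab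
    have hsumrow : Summable (fun j : ℕ => ∑' lam : {l : Λ // s l = j}, F lam.1) := by
      refine Summable.of_nonneg_of_le
        (fun j => tsum_nonneg fun lam => hF0 lam.1)
        (fun j => (hfib j).2) (hHsum.comp_injective hinj)
    have hsig : Summable (fun p : (j : ℕ) × {l : Λ // s l = j} => F (e p)) := by
      rw [summable_sigma_of_nonneg hsig0]
      exact ⟨fun j => (hfib j).1, hsumrow⟩
    have hFsum : Summable F := (Equiv.summable_iff e).mp hsig
    refine ⟨hFsum, ?_⟩
    have hteq : (∑' lam, F lam) = ∑' j : ℕ, ∑' lam : {l : Λ // s l = j}, F lam.1 := by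
      rw [← Equiv.tsum_eq e F, Summable.tsum_sigma hsig]
      rfl
    rw [hteq]
    exact Summable.tsum_le_tsum_of_inj _ hinj (fun c _ => hHnonneg c) (fun j => (hfib j).2)
      hsumrow hHsum
  refine ⟨fun μ => (main μ).1, ⟨∑' n, H n, fun μ => (main μ).2⟩⟩
end
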